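/- arXiv:2411.03163 — 2 statements merged into one kernel-verified Lean document; each statement's English description precedes it below -/
import Mathlib

section
/- Let H = S⁻ᵀDS⁻¹ be a Hamiltonian matrix with symplectic diagonalization (S symplectic, D = diag(d₁,d₁,…,d_m,d_m), all d_i > 0, d_max the largest d_i) and let V := (1/2)·S·diag(coth d₁, coth d₁,…, coth d_m, coth d_m)·Sᵀ be its covariance matrix. Then for every real t ≥ 0 the complex matrix 2iΩV + ((t−1)/(t+1))·I is invertible and its smallest singular value is at least (2/‖S‖∞²)·e^{−2 d_max}/(1 − e^{−2 d_max}); equivalently, ‖(2iΩV + ((t−1)/(t+1))·I)⁻¹‖∞ ≤ (‖S‖∞²/2)·(e^{2 d_max} − 1). -/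
open Matrix

/-- The spectral norm (ℓ²→ℓ² operator norm, largest singular value) of a matrix. -/
noncomputable def spNorm {𝕜 : Type*} [RCLike 𝕜] {p q : Type*} [Fintype p] [Fintype q]
    [DecidableEq q] (A : Matrix p q 𝕜) : ℝ :=
  ‖LinearMap.toContinuousLinearMap (Matrix.toEuclideanLin A)‖

/-- Index set for `2m × 2m` matrices: the pair `(i, δ)` stands for the index `2i - δ`,
`(i, 0)` being the first index of the `i`-th pair and `(i, 1)` the second. -/
abbrev Idx (m : ℕ) := Fin m × Fin 2

/-- The standard symplectic form: block diagonal with `m` blocks `[[0,1],[-1,0]]`. -/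
def Omega (m : ℕ) : Matrix (Idx m) (Idx m) ℝ :=
  Matrix.of fun p q =>
    if p.1 = q.1 ∧ p.2 = 0 ∧ q.2 = 1 then 1
    else if p.1 = q.1 ∧ p.2 = 1 ∧ q.2 = 0 then -1 else 0

/-- The diagonal matrix `diag (d₁, d₁, …, d_m, d_m)`. -/
def pairDiag {m : ℕ} (d : Fin m → ℝ) : Matrix (Idx m) (Idx m) ℝ :=
  Matrix.diagonal fun p => d p.1

/-- Hyperbolic cotangent. -/
noncomputable def rcoth (x : ℝ) : ℝ := Real.cosh x / Real.sinh x

/-- A real matrix regarded as a complex matrix. -/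
def cplx {p q : Type*} (A : Matrix p q ℝ) : Matrix p q ℂ :=
  A.map (fun x => (x : ℂ))

open scoped Matrix.Norms.L2Operator

/-! Write `C = diag(coth dᵢ)` and `l = (t-1)/(t+1)`. For symplectic `S` one has
`S⁻ᵀ = -ΩSΩ`, hence `ΩS = S⁻ᵀΩ` and `2iΩV + l = S⁻ᵀ (iΩC + l) Sᵀ`. Since `iΩ` is unitary,
`‖(iΩC + l)y‖ ≥ ‖Cy‖ - |l|‖y‖ ≥ γ‖y‖` with `γ = 2/(e^{2 d_max} - 1)`, because
`coth dᵢ = 1 + 2/(e^{2dᵢ} - 1) ≥ 1 + γ` and `|l| ≤ 1`. Conjugation by `Sᵀ` costs at most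
`‖-ΩSΩ‖‖Sᵀ‖ = ‖S‖²`, and a lower bound `c‖x‖ ≤ ‖Ax‖` makes `A` invertible with
`‖A⁻¹‖ ≤ 1/c`. -/

namespace Matrix

variable {𝕜 n : Type*} [RCLike 𝕜] [Fintype n] [DecidableEq n]

lemma norm_toEuclideanLin_apply_le (A : Matrix n n 𝕜) (x : EuclideanSpace 𝕜 n) :
    ‖toEuclideanLin A x‖ ≤ ‖A‖ * ‖x‖ :=
  (toEuclideanCLM (n := n) (𝕜 := 𝕜) A).le_opNorm x

lemma norm_toEuclideanLin_apply_of_mem_unitary {U : Matrix n n 𝕜}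
    (hU : U ∈ unitary (Matrix n n 𝕜)) (x : EuclideanSpace 𝕜 n) : ‖toEuclideanLin U x‖ = ‖x‖ :=
  ContinuousLinearMap.norm_map_of_mem_unitary
    (Unitary.map_mem (toEuclideanCLM (n := n) (𝕜 := 𝕜)) hU) x

lemma mul_norm_le_norm_toEuclideanLin_diagonal_apply {v : n → 𝕜} {a : ℝ} (ha : 0 ≤ a)
    (hv : ∀ i, a ≤ ‖v i‖) (x : EuclideanSpace 𝕜 n) :
    a * ‖x‖ ≤ ‖toEuclideanLin (diagonal v) x‖ := by
  refine (sq_le_sq₀ (by positivity) (by positivity)).mp ?_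
  simp only [mul_pow, EuclideanSpace.norm_sq_eq, toLpLin_apply, mulVec_diagonal, norm_mul,
    Finset.mul_sum]
  gcongr with i
  exact hv i

lemma sub_norm_mul_norm_le_norm_toEuclideanLin_unitary_mul_diagonal_add_apply {U : Matrix n n 𝕜}
    (hU : U ∈ unitary (Matrix n n 𝕜)) {v : n → 𝕜} {a : ℝ} (ha : 0 ≤ a) (hv : ∀ i, a ≤ ‖v i‖)
    (l : 𝕜) (x : EuclideanSpace 𝕜 n) :
    (a - ‖l‖) * ‖x‖ ≤ ‖toEuclideanLin (U * diagonal v + l • 1) x‖ := by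
  have hUv : ‖toEuclideanLin (U * diagonal v) x‖ = ‖toEuclideanLin (diagonal v) x‖ := by
    rw [toLpLin_mul_same, LinearMap.comp_apply, norm_toEuclideanLin_apply_of_mem_unitary hU]
  calc (a - ‖l‖) * ‖x‖ = a * ‖x‖ - ‖l • x‖ := by rw [norm_smul]; ring
    _ ≤ ‖toEuclideanLin (U * diagonal v) x‖ - ‖l • x‖ := by
      rw [hUv]; gcongr; exact mul_norm_le_norm_toEuclideanLin_diagonal_apply ha hv x
    _ ≤ ‖toEuclideanLin (U * diagonal v + l • 1) x‖ := by
      simpa using norm_sub_le_norm_add (toEuclideanLin (U * diagonal v) x) (l • x)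

lemma mul_norm_le_norm_toEuclideanLin_mul_mul_apply {K P Q : Matrix n n 𝕜} (hQP : Q * P = 1)
    {γ : ℝ} (hγ : 0 ≤ γ) (hK : ∀ y, γ * ‖y‖ ≤ ‖toEuclideanLin K y‖) (x : EuclideanSpace 𝕜 n) :
    γ * ‖x‖ ≤ ‖Q‖ * ‖P‖ * ‖toEuclideanLin (Q * K * P) x‖ := by
  have hPQKP : P * (Q * K * P) = K * P := by
    rw [← Matrix.mul_assoc, ← Matrix.mul_assoc, mul_eq_one_comm.mp hQP, Matrix.one_mul]
  calc γ * ‖x‖ = γ * ‖toEuclideanLin Q (toEuclideanLin P x)‖ := by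
        rw [← LinearMap.comp_apply, ← toLpLin_mul_same, hQP, toLpLin_one, LinearMap.id_apply]
    _ ≤ ‖Q‖ * (γ * ‖toEuclideanLin P x‖) := by
      rw [mul_left_comm]; gcongr; exact norm_toEuclideanLin_apply_le Q _
    _ ≤ ‖Q‖ * ‖toEuclideanLin P (toEuclideanLin (Q * K * P) x)‖ := by
      rw [← LinearMap.comp_apply, ← toLpLin_mul_same, hPQKP, toLpLin_mul_same,
        LinearMap.comp_apply]
      gcongr; exact hK _
    _ ≤ ‖Q‖ * (‖P‖ * ‖toEuclideanLin (Q * K * P) x‖) := by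
      gcongr; exact norm_toEuclideanLin_apply_le P _
    _ = ‖Q‖ * ‖P‖ * ‖toEuclideanLin (Q * K * P) x‖ := (mul_assoc _ _ _).symm

lemma isUnit_and_norm_inv_le_of_mul_norm_le {A : Matrix n n 𝕜} {c : ℝ} (hc : 0 < c)
    (hA : ∀ x, c * ‖x‖ ≤ ‖toEuclideanLin A x‖) : IsUnit A ∧ ‖A⁻¹‖ ≤ c⁻¹ := by
  have hker : ∀ x, toEuclideanLin A x = 0 → x = 0 := fun x hx =>
    norm_le_zero_iff.mp <| le_of_mul_le_mul_left (by simpa [hx] using hA x) hc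
  have hunit : IsUnit A := mulVec_injective_iff_isUnit.mp fun x y hxy =>
    WithLp.toLp_injective 2 <| (injective_iff_map_eq_zero _).mpr hker <| by simp [hxy]
  refine ⟨hunit, (toEuclideanCLM (n := n) (𝕜 := 𝕜) A⁻¹).opNorm_le_bound (by positivity) fun y => ?_⟩
  have h := hA (toEuclideanLin A⁻¹ y)
  rw [← LinearMap.comp_apply, ← toLpLin_mul_same,
    mul_nonsing_inv A ((isUnit_iff_isUnit_det A).mp hunit), toLpLin_one, LinearMap.id_apply] at h
  rw [le_inv_mul_iff₀ hc]
  exact h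

end Matrix

section Complexification

variable {n : Type*}

@[simp] lemma cplx_apply {p q : Type*} (A : Matrix p q ℝ) (i : p) (j : q) :
    cplx A i j = A i j := rfl

lemma cplx_mul [Fintype n] (A B : Matrix n n ℝ) : cplx (A * B) = cplx A * cplx B :=
  Matrix.map_mul (f := Complex.ofRealHom)

lemma cplx_one [DecidableEq n] : cplx (1 : Matrix n n ℝ) = 1 :=
  Matrix.map_one _ Complex.ofReal_zero Complex.ofReal_one

lemma cplx_neg (A : Matrix n n ℝ) : cplx (-A) = -cplx A := by ext; simp

lemma cplx_smul (r : ℝ) (A : Matrix n n ℝ) : cplx (r • A) = (r : ℂ) • cplx A := by ext; simp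

lemma conjTranspose_cplx (A : Matrix n n ℝ) : (cplx A)ᴴ = cplx Aᵀ := by ext; simp

lemma cplx_diagonal [DecidableEq n] (v : n → ℝ) :
    cplx (Matrix.diagonal v) = Matrix.diagonal fun i => (v i : ℂ) :=
  Matrix.diagonal_map Complex.ofReal_zero

lemma EuclideanSpace.norm_sq_eq_norm_re_sq_add_norm_im_sq [Fintype n] (x : EuclideanSpace ℂ n) :
    ‖x‖ ^ 2 = ‖(WithLp.toLp 2 fun i => (x i).re : EuclideanSpace ℝ n)‖ ^ 2 +
      ‖(WithLp.toLp 2 fun i => (x i).im : EuclideanSpace ℝ n)‖ ^ 2 := by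
  rw [EuclideanSpace.norm_sq_eq, EuclideanSpace.norm_sq_eq, EuclideanSpace.norm_sq_eq,
    ← Finset.sum_add_distrib]
  simp [Complex.sq_norm, Complex.normSq_apply, ← sq]

lemma norm_cplx_le [Fintype n] [DecidableEq n] (B : Matrix n n ℝ) : ‖cplx B‖ ≤ ‖B‖ := by
  refine (Matrix.toEuclideanCLM (n := n) (𝕜 := ℂ) (cplx B)).opNorm_le_bound (norm_nonneg _)
    fun x => (sq_le_sq₀ (norm_nonneg _) (by positivity)).mp ?_
  set y := Matrix.toEuclideanCLM (n := n) (𝕜 := ℂ) (cplx B) x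
  have hre : (WithLp.toLp 2 fun i => (y i).re : EuclideanSpace ℝ n) =
      Matrix.toEuclideanLin B (WithLp.toLp 2 fun i => (x i).re) := by
    ext i; simp [y, Matrix.mulVec, dotProduct, Complex.re_sum]
  have him : (WithLp.toLp 2 fun i => (y i).im : EuclideanSpace ℝ n) =
      Matrix.toEuclideanLin B (WithLp.toLp 2 fun i => (x i).im) := by
    ext i; simp [y, Matrix.mulVec, dotProduct, Complex.im_sum]
  rw [EuclideanSpace.norm_sq_eq_norm_re_sq_add_norm_im_sq, hre, him, mul_pow,
    EuclideanSpace.norm_sq_eq_norm_re_sq_add_norm_im_sq x, mul_add, ← mul_pow, ← mul_pow]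
  gcongr <;> exact Matrix.norm_toEuclideanLin_apply_le _ _

lemma norm_cplx_transpose [Fintype n] [DecidableEq n] (A : Matrix n n ℝ) :
    ‖cplx Aᵀ‖ = ‖cplx A‖ := by
  rw [← conjTranspose_cplx, Matrix.l2_opNorm_conjTranspose]

end Complexification

lemma Omega_transpose (m : ℕ) : (Omega m)ᵀ = -Omega m := by
  ext ⟨i, δ⟩ ⟨j, ε⟩
  fin_cases δ <;> fin_cases ε <;> by_cases h : i = j <;> simp [Omega, h, eq_comm]

lemma Omega_mul_Omega (m : ℕ) : Omega m * Omega m = -1 := by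
  ext ⟨i, δ⟩ ⟨j, ε⟩
  simp only [mul_apply, Omega, of_apply, Fintype.sum_prod_type, Fin.sum_univ_two]
  fin_cases δ <;> fin_cases ε <;> by_cases h : i = j <;>
    simp [h, one_apply, Prod.ext_iff, eq_comm]

lemma Omega_ne_zero {m : ℕ} (hm : 0 < m) : Omega m ≠ 0 := fun h => by
  simpa [Omega] using congrFun (congrFun h (⟨0, hm⟩, 0)) (⟨0, hm⟩, 1)

lemma cplx_Omega_mem_unitary (m : ℕ) :
    cplx (Omega m) ∈ unitary (Matrix (Idx m) (Idx m) ℂ) := by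
  have h : star (cplx (Omega m)) * cplx (Omega m) = 1 := by
    rw [star_eq_conjTranspose, conjTranspose_cplx, Omega_transpose, ← cplx_mul, neg_mul,
      Omega_mul_Omega, neg_neg, cplx_one]
  exact Unitary.mem_iff.mpr ⟨h, mul_eq_one_comm.mp h⟩

lemma neg_Omega_mul_mul_Omega_mul_transpose_eq_one {m : ℕ} {S : Matrix (Idx m) (Idx m) ℝ}
    (hS : S * Omega m * Sᵀ = Omega m) : -(Omega m * S * Omega m) * Sᵀ = 1 := by
  rw [neg_mul, Matrix.mul_assoc, Matrix.mul_assoc, ← Matrix.mul_assoc S, hS, Omega_mul_Omega,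
    neg_neg]

lemma spNorm_pos_of_symplectic {m : ℕ} (hm : 0 < m) {S : Matrix (Idx m) (Idx m) ℝ}
    (hS : S * Omega m * Sᵀ = Omega m) : 0 < spNorm S :=
  show 0 < ‖S‖ from norm_pos_iff.mpr <| by
    rintro rfl
    exact Omega_ne_zero hm (by simpa using hS.symm)

lemma two_I_smul_Omega_mul_covariance_add_smul_one_eq_conj {m : ℕ} {S : Matrix (Idx m) (Idx m) ℝ}
    (hS : S * Omega m * Sᵀ = Omega m) (c : Fin m → ℝ) (l : ℂ) :
    (2 * Complex.I) • (cplx (Omega m) * cplx ((1 / 2 : ℝ) • (S * pairDiag c * Sᵀ))) + l • 1 =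
      cplx (-(Omega m * S * Omega m)) *
        ((Complex.I • cplx (Omega m)) * cplx (pairDiag c) + l • 1) * cplx Sᵀ := by
  have hconj : -(Omega m * S * Omega m) * Omega m * pairDiag c * Sᵀ =
      Omega m * (S * pairDiag c * Sᵀ) := by
    rw [show -(Omega m * S * Omega m) * Omega m * pairDiag c * Sᵀ =
      -(Omega m * S * (Omega m * Omega m) * pairDiag c * Sᵀ) by noncomm_ring, Omega_mul_Omega]
    noncomm_ring
  have hinv := congrArg cplx (neg_Omega_mul_mul_Omega_mul_transpose_eq_one hS)
  have hconj' := congrArg cplx hconj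
  simp only [cplx_mul, cplx_one] at hinv hconj'
  simp only [Matrix.mul_add, Matrix.add_mul, smul_mul_assoc, mul_smul_comm, Matrix.mul_one,
    ← Matrix.mul_assoc, hinv, hconj', cplx_smul, cplx_mul, smul_smul]
  congr 2
  push_cast; ring

lemma norm_cplx_neg_Omega_mul_mul_Omega {m : ℕ} (S : Matrix (Idx m) (Idx m) ℝ) :
    ‖cplx (-(Omega m * S * Omega m))‖ = ‖cplx S‖ := by
  rw [cplx_neg, cplx_mul, cplx_mul, norm_neg,
    CStarRing.norm_mul_mem_unitary _ (cplx_Omega_mem_unitary m),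
    CStarRing.norm_mem_unitary_mul _ (cplx_Omega_mem_unitary m)]

lemma rcoth_eq_one_add_two_div {x : ℝ} (hx : x ≠ 0) :
    rcoth x = 1 + 2 / (Real.exp (2 * x) - 1) := by
  have hsq : Real.exp (2 * x) = Real.exp x ^ 2 := by rw [sq, ← Real.exp_add, two_mul]
  have h : Real.exp x ^ 2 - 1 ≠ 0 := by
    rw [← hsq, sub_ne_zero, Ne, Real.exp_eq_one_iff]
    contrapose! hx; linarith
  rw [rcoth, Real.cosh_eq, Real.sinh_eq, Real.exp_neg, hsq]
  field_simp
  ring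

lemma one_add_two_div_le_rcoth {x y : ℝ} (hx : 0 < x) (hxy : x ≤ y) :
    1 + 2 / (Real.exp (2 * y) - 1) ≤ rcoth x := by
  rw [rcoth_eq_one_add_two_div hx.ne']
  gcongr
  exact sub_pos.mpr (Real.one_lt_exp_iff.mpr (by linarith))

lemma abs_sub_one_div_add_one_le_one {t : ℝ} (ht : 0 ≤ t) : |(t - 1) / (t + 1)| ≤ 1 := by
  rw [abs_div, abs_of_pos (by linarith : 0 < t + 1), div_le_one (by linarith), abs_le]
  constructor <;> linarith

lemma mul_norm_le_norm_toEuclideanLin_I_smul_Omega_mul_pairDiag_add_apply {m : ℕ}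
    {c : Fin m → ℝ} {γ : ℝ} (hγ : 0 ≤ γ) (hc : ∀ i, 1 + γ ≤ c i) {l : ℝ} (hl : |l| ≤ 1)
    (y : EuclideanSpace ℂ (Idx m)) :
    γ * ‖y‖ ≤ ‖toEuclideanLin
      ((Complex.I • cplx (Omega m)) * cplx (pairDiag c) + (l : ℂ) • 1) y‖ := by
  have hIJ : Complex.I • cplx (Omega m) ∈ unitary (Matrix (Idx m) (Idx m) ℂ) :=
    Unitary.smul_mem_of_mem (by rw [Unitary.mem_iff]; simp) (cplx_Omega_mem_unitary m)
  have hc' : ∀ p : Idx m, 1 + γ ≤ ‖(c p.1 : ℂ)‖ := fun p => by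
    rw [Complex.norm_real, Real.norm_eq_abs]
    exact (hc p.1).trans (le_abs_self _)
  rw [pairDiag, cplx_diagonal]
  refine le_trans ?_ (Matrix.sub_norm_mul_norm_le_norm_toEuclideanLin_unitary_mul_diagonal_add_apply
    hIJ (by positivity) hc' _ y)
  rw [Complex.norm_real, Real.norm_eq_abs]
  gcongr
  linarith

lemma div_sq_spNorm_mul_norm_le_norm_toEuclideanLin_covariance_apply {m : ℕ}
    {S : Matrix (Idx m) (Idx m) ℝ} (hS : S * Omega m * Sᵀ = Omega m) (hS₀ : 0 < spNorm S)
    {c : Fin m → ℝ} {γ : ℝ} (hγ : 0 ≤ γ) (hc : ∀ i, 1 + γ ≤ c i) {l : ℝ} (hl : |l| ≤ 1)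
    (x : EuclideanSpace ℂ (Idx m)) :
    γ / spNorm S ^ 2 * ‖x‖ ≤ ‖toEuclideanLin ((2 * Complex.I) •
      (cplx (Omega m) * cplx ((1 / 2 : ℝ) • (S * pairDiag c * Sᵀ))) + (l : ℂ) • 1) x‖ := by
  have hQP : cplx (-(Omega m * S * Omega m)) * cplx Sᵀ = 1 := by
    rw [← cplx_mul, neg_Omega_mul_mul_Omega_mul_transpose_eq_one hS, cplx_one]
  rw [two_I_smul_Omega_mul_covariance_add_smul_one_eq_conj hS, div_mul_eq_mul_div,
    div_le_iff₀ (by positivity), mul_comm _ (spNorm S ^ 2)]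
  calc γ * ‖x‖ ≤ _ := Matrix.mul_norm_le_norm_toEuclideanLin_mul_mul_apply hQP hγ
        (mul_norm_le_norm_toEuclideanLin_I_smul_Omega_mul_pairDiag_add_apply hγ hc hl) x
    _ ≤ _ := by
      rw [norm_cplx_neg_Omega_mul_mul_Omega, norm_cplx_transpose, ← sq]
      gcongr
      exact norm_cplx_le S

theorem statement1_general {m : ℕ} (hm : 0 < m)
    (S : Matrix (Idx m) (Idx m) ℝ) (hS : S * Omega m * Sᵀ = Omega m)
    (d : Fin m → ℝ) (hd : ∀ i, 0 < d i)
    (dmax : ℝ) (hdmax_le : ∀ i, d i ≤ dmax) (hdmax_mem : ∃ i, d i = dmax)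
    (V : Matrix (Idx m) (Idx m) ℝ)
    (hV : V = (1/2 : ℝ) • (S * pairDiag (fun i => rcoth (d i)) * Sᵀ))
    (t : ℝ) (ht : 0 ≤ t) :
    IsUnit ((2 * Complex.I) • (cplx (Omega m) * cplx V) + (((t - 1)/(t + 1) : ℝ) : ℂ) • 1) ∧
    (∀ x : EuclideanSpace ℂ (Idx m),
      (2 / spNorm S ^ 2) * (Real.exp (-2 * dmax) / (1 - Real.exp (-2 * dmax))) * ‖x‖ ≤
        ‖Matrix.toEuclideanLin
          ((2 * Complex.I) • (cplx (Omega m) * cplx V) + (((t - 1)/(t + 1) : ℝ) : ℂ) • 1) x‖) ∧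
    spNorm ((2 * Complex.I) • (cplx (Omega m) * cplx V) + (((t - 1)/(t + 1) : ℝ) : ℂ) • 1)⁻¹
      ≤ (spNorm S ^ 2 / 2) * (Real.exp (2 * dmax) - 1) := by
  obtain ⟨i₀, hi₀⟩ := hdmax_mem
  have hexp : 1 < Real.exp (2 * dmax) := Real.one_lt_exp_iff.mpr (by linarith [hd i₀])
  set γ := 2 / (Real.exp (2 * dmax) - 1)
  have hγ : 0 < γ := div_pos two_pos (sub_pos.mpr hexp)
  have hs := spNorm_pos_of_symplectic hm hS
  have hM := hV ▸ div_sq_spNorm_mul_norm_le_norm_toEuclideanLin_covariance_apply hS hs hγ.le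
    (fun i => one_add_two_div_le_rcoth (hd i) (hdmax_le i)) (abs_sub_one_div_add_one_le_one ht)
  have hconst : 2 / spNorm S ^ 2 * (Real.exp (-2 * dmax) / (1 - Real.exp (-2 * dmax))) =
      γ / spNorm S ^ 2 := by
    rw [neg_mul, Real.exp_neg]
    field_simp
    rfl
  obtain ⟨hunit, hinv⟩ := Matrix.isUnit_and_norm_inv_le_of_mul_norm_le (by positivity) hM
  refine ⟨hunit, hconst ▸ hM, hinv.trans_eq ?_⟩
  simp only [γ]
  field_simp

/-- For a Gaussian Hamiltonian `H = S⁻ᵀ D S⁻¹` with covariance matrix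
`V = (1/2) S coth(D) Sᵀ`, for every `t ≥ 0` the matrix `2iΩV + ((t-1)/(t+1))·I` is
invertible, its smallest singular value is at least `(2/‖S‖∞²)·e^{-2 d_max}/(1-e^{-2 d_max})`,
and equivalently `‖(2iΩV + ((t-1)/(t+1))·I)⁻¹‖∞ ≤ (‖S‖∞²/2)·(e^{2 d_max} - 1)`. -/
theorem statement1 {m : ℕ} (hm : 0 < m)
    (S : Matrix (Idx m) (Idx m) ℝ) (hS : S * Omega m * Sᵀ = Omega m)
    (d : Fin m → ℝ) (hd : ∀ i, 0 < d i)
    (dmax : ℝ) (hdmax_le : ∀ i, d i ≤ dmax) (hdmax_mem : ∃ i, d i = dmax)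
    (H : Matrix (Idx m) (Idx m) ℝ) (hH : H = (S⁻¹)ᵀ * pairDiag d * S⁻¹)
    (V : Matrix (Idx m) (Idx m) ℝ)
    (hV : V = (1/2 : ℝ) • (S * pairDiag (fun i => rcoth (d i)) * Sᵀ))
    (t : ℝ) (ht : 0 ≤ t) :
    IsUnit ((2 * Complex.I) • (cplx (Omega m) * cplx V) + (((t - 1)/(t + 1) : ℝ) : ℂ) • 1) ∧
    (∀ x : EuclideanSpace ℂ (Idx m),
      (2 / spNorm S ^ 2) * (Real.exp (-2 * dmax) / (1 - Real.exp (-2 * dmax))) * ‖x‖ ≤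
        ‖Matrix.toEuclideanLin
          ((2 * Complex.I) • (cplx (Omega m) * cplx V) + (((t - 1)/(t + 1) : ℝ) : ℂ) • 1) x‖) ∧
    spNorm ((2 * Complex.I) • (cplx (Omega m) * cplx V) + (((t - 1)/(t + 1) : ℝ) : ℂ) • 1)⁻¹
      ≤ (spNorm S ^ 2 / 2) * (Real.exp (2 * dmax) - 1) :=
  statement1_general hm S hS d hd dmax hdmax_le hdmax_mem V hV t ht
end

section
/- Let S be a 2m×2m real symplectic matrix and D = diag(d₁,d₁,…,d_m,d_m) with all d_i > 0, and let d_min := min_i d_i and H := S⁻ᵀDS⁻¹ (a symmetric positive definite matrix). Then ‖S‖∞ ≥ 1 and ‖H‖∞ ≥ d_min·‖S‖∞²; consequently, writing λ_max for the largest eigenvalue of H, one has 1 ≤ ‖S‖∞² ≤ λ_max/d_min. -/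
open Matrix

/-! The symplectic relation `S Ω Sᵀ = Ω`, with `Ω` orthogonal, gives `S⁻¹ = Ω Sᵀ Ωᵀ`, so
`‖S⁻¹‖ = ‖S‖` and `1 = ‖S⁻¹ S‖ ≤ ‖S‖²`. Writing `D = E²` with `E = diag(√dᵢ)`, the C*-identity
gives `‖H‖ = ‖E S⁻¹‖²`, while `‖S⁻¹‖ ≤ ‖E⁻¹‖ ‖E S⁻¹‖ ≤ ‖E S⁻¹‖ / √d_min`. -/

open scoped Matrix.Norms.L2Operator

theorem spNorm_eq_l2_opNorm {𝕜 : Type*} [RCLike 𝕜] {p q : Type*} [Fintype p] [Fintype q]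
    [DecidableEq q] (A : Matrix p q 𝕜) : spNorm A = ‖A‖ := rfl

section Unitary

variable {n 𝕜 : Type*} [Fintype n] [DecidableEq n] [RCLike 𝕜] {U S : Matrix n n 𝕜}

theorem Matrix.mul_mul_conjTranspose_mul_eq_one (hU : U ∈ unitary (Matrix n n 𝕜))
    (hS : S * U * Sᴴ = U) : S * (U * Sᴴ * Uᴴ) = 1 := by
  rw [← Matrix.mul_assoc, ← Matrix.mul_assoc, hS, ← star_eq_conjTranspose,
    Unitary.mul_star_self_of_mem hU]

theorem Matrix.inv_eq_of_mul_mul_conjTranspose_eq (hU : U ∈ unitary (Matrix n n 𝕜))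
    (hS : S * U * Sᴴ = U) : S⁻¹ = U * Sᴴ * Uᴴ :=
  inv_eq_right_inv (mul_mul_conjTranspose_mul_eq_one hU hS)

theorem Matrix.l2_opNorm_inv_of_mul_mul_conjTranspose_eq (hU : U ∈ unitary (Matrix n n 𝕜))
    (hS : S * U * Sᴴ = U) : ‖S⁻¹‖ = ‖S‖ := by
  have hUH : Uᴴ ∈ unitary (Matrix n n 𝕜) := Unitary.star_mem hU
  rw [inv_eq_of_mul_mul_conjTranspose_eq hU hS, CStarRing.norm_mul_mem_unitary _ hUH,
    CStarRing.norm_mem_unitary_mul _ hU, l2_opNorm_conjTranspose]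

theorem Matrix.one_le_l2_opNorm_of_mul_mul_conjTranspose_eq [Nonempty n]
    (hU : U ∈ unitary (Matrix n n 𝕜)) (hS : S * U * Sᴴ = U) : 1 ≤ ‖S‖ := by
  have hone : S⁻¹ * S = 1 := by
    rw [inv_eq_of_mul_mul_conjTranspose_eq hU hS]
    exact mul_eq_one_comm.mp (mul_mul_conjTranspose_mul_eq_one hU hS)
  have : 1 ≤ ‖S‖ ^ 2 := by
    calc (1 : ℝ) = ‖S⁻¹ * S‖ := by rw [hone, norm_one]
      _ ≤ ‖S⁻¹‖ * ‖S‖ := norm_mul_le _ _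
      _ = ‖S‖ ^ 2 := by rw [l2_opNorm_inv_of_mul_mul_conjTranspose_eq hU hS, sq]
  exact (one_le_sq_iff₀ (norm_nonneg S)).mp this

end Unitary

section Diagonal

variable {m n 𝕜 : Type*} [Fintype m] [Fintype n] [DecidableEq m] [DecidableEq n] [RCLike 𝕜]

theorem Matrix.mul_l2_opNorm_le_l2_opNorm_diagonal_mul {c : ℝ} (hc : 0 < c) {e : m → 𝕜}
    (he : ∀ i, c ≤ ‖e i‖) (B : Matrix m n 𝕜) : c * ‖B‖ ≤ ‖diagonal e * B‖ := by
  have he0 : ∀ i, e i ≠ 0 := fun i => norm_pos_iff.mp (hc.trans_le (he i))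
  have hinv : diagonal e⁻¹ * diagonal e = 1 := by
    rw [diagonal_mul_diagonal, ← diagonal_one]
    exact congrArg diagonal (funext fun i => inv_mul_cancel₀ (he0 i))
  have hnorm : ‖(diagonal e⁻¹ : Matrix m m 𝕜)‖ ≤ c⁻¹ := by
    rw [l2_opNorm_diagonal, pi_norm_le_iff_of_nonneg (inv_nonneg.mpr hc.le)]
    intro i
    rw [Pi.inv_apply, norm_inv]
    exact inv_anti₀ hc (he i)
  calc c * ‖B‖ = c * ‖diagonal e⁻¹ * (diagonal e * B)‖ := by
        rw [← Matrix.mul_assoc, hinv, Matrix.one_mul]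
    _ ≤ c * (c⁻¹ * ‖diagonal e * B‖) := by
        gcongr
        exact (l2_opNorm_mul _ _).trans (mul_le_mul_of_nonneg_right hnorm (norm_nonneg _))
    _ = ‖diagonal e * B‖ := by field_simp

theorem Matrix.mul_sq_l2_opNorm_le_l2_opNorm_conjTranspose_mul_diagonal_mul {c : ℝ} (hc : 0 < c)
    {d : m → ℝ} (hd : ∀ i, c ≤ d i) (B : Matrix m n 𝕜) :
    c * ‖B‖ ^ 2 ≤ ‖Bᴴ * diagonal (fun i => (d i : 𝕜)) * B‖ := by
  set E : Matrix m m 𝕜 := diagonal fun i => (√(d i) : 𝕜)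
  have hD : Bᴴ * diagonal (fun i => (d i : 𝕜)) * B = (E * B)ᴴ * (E * B) := by
    have : Eᴴ * E = diagonal fun i => (d i : 𝕜) := by
      rw [diagonal_conjTranspose, diagonal_mul_diagonal]
      congr 1; funext i
      simp only [Pi.star_apply, RCLike.star_def, RCLike.conj_ofReal, ← RCLike.ofReal_mul,
        Real.mul_self_sqrt (hc.le.trans (hd i))]
    rw [conjTranspose_mul, ← this]
    simp only [Matrix.mul_assoc]
  have hE : √c * ‖B‖ ≤ ‖E * B‖ := by
    refine mul_l2_opNorm_le_l2_opNorm_diagonal_mul (Real.sqrt_pos.mpr hc) (fun i => ?_) B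
    rw [RCLike.norm_ofReal, abs_of_nonneg (Real.sqrt_nonneg _)]
    exact Real.sqrt_le_sqrt (hd i)
  calc c * ‖B‖ ^ 2 = (√c * ‖B‖) ^ 2 := by rw [mul_pow, Real.sq_sqrt hc.le]
    _ ≤ ‖E * B‖ ^ 2 := by gcongr
    _ = _ := by rw [hD, l2_opNorm_conjTranspose_mul_self, sq]

end Diagonal

theorem Omega_mul_transpose (m : ℕ) : Omega m * (Omega m)ᵀ = 1 := by
  ext ⟨i, a⟩ ⟨j, b⟩
  simp only [mul_apply, Omega, transpose_apply, of_apply, Fintype.sum_prod_type, one_apply,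
    Prod.mk.injEq]
  by_cases hij : i = j
  · subst hij
    fin_cases a <;> fin_cases b <;> simp [Fin.sum_univ_two]
  · fin_cases a <;> fin_cases b <;> simp [hij, Fin.sum_univ_two]

theorem Omega_mem_unitary (m : ℕ) : Omega m ∈ unitary (Matrix (Idx m) (Idx m) ℝ) := by
  rw [← unitaryGroup, mem_unitaryGroup_iff, star_eq_conjTranspose,
    conjTranspose_eq_transpose_of_trivial]
  exact Omega_mul_transpose m

/-- For a symplectic `S` and `H = S⁻ᵀ D S⁻¹` with
`D = diag(d₁,d₁,…,d_m,d_m)`, `d_i > 0`: `‖S‖∞ ≥ 1` and `‖H‖∞ ≥ d_min·‖S‖∞²`;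
consequently `1 ≤ ‖S‖∞² ≤ λ_max/d_min`, where `λ_max` is the largest eigenvalue of `H`
(which, `H` being symmetric positive definite, equals its spectral norm `‖H‖∞`). -/
theorem statement19 {m : ℕ} (hm : 0 < m)
    (S : Matrix (Idx m) (Idx m) ℝ) (hS : S * Omega m * Sᵀ = Omega m)
    (d : Fin m → ℝ) (hd : ∀ i, 0 < d i)
    (dmin : ℝ) (hdmin_le : ∀ i, dmin ≤ d i) (hdmin_mem : ∃ i, d i = dmin)
    (H : Matrix (Idx m) (Idx m) ℝ) (hH : H = (S⁻¹)ᵀ * pairDiag d * S⁻¹) :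
    1 ≤ spNorm S ∧
    dmin * spNorm S ^ 2 ≤ spNorm H ∧
    1 ≤ spNorm S ^ 2 ∧
    spNorm S ^ 2 ≤ spNorm H / dmin := by
  have : Nonempty (Idx m) := ⟨(⟨0, hm⟩, 0)⟩
  have hdmin : 0 < dmin := by
    obtain ⟨i, rfl⟩ := hdmin_mem
    exact hd i
  rw [← conjTranspose_eq_transpose_of_trivial] at hS hH
  have hS_ge : 1 ≤ ‖S‖ := one_le_l2_opNorm_of_mul_mul_conjTranspose_eq (Omega_mem_unitary m) hS
  have hH_ge : dmin * ‖S‖ ^ 2 ≤ ‖H‖ := by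
    rw [← l2_opNorm_inv_of_mul_mul_conjTranspose_eq (Omega_mem_unitary m) hS, hH]
    have := mul_sq_l2_opNorm_le_l2_opNorm_conjTranspose_mul_diagonal_mul (𝕜 := ℝ) hdmin
      (fun p : Idx m => hdmin_le p.1) S⁻¹
    rwa [RCLike.ofReal_real_eq_id] at this
  simp only [spNorm_eq_l2_opNorm]
  exact ⟨hS_ge, hH_ge, one_le_pow₀ hS_ge, (le_div_iff₀' hdmin).mpr hH_ge⟩
end
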